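/- arXiv:2301.00232 — 2 statements merged into one kernel-verified Lean document; each statement's English description precedes it below -/
import Mathlib

section
/- The school-level diversity policy set Ξ^D = {ξ ∈ Ξ^0 : ∀(c,t), p_c^t ≤ ξ_c^t ≤ q_c^t} is M♮-convex, given type-specific floors p_c^t and ceilings q_c^t with p_c^t ≤ q_c^t and capacities satisfying q_c ≥ Σ_t p_c^t for each school c. -/
variable {C T : Type*} [Fintype C] [Fintype T] [DecidableEq C] [DecidableEq T]

/-- The unit vector with a 1 in coordinate `(c, t)` and 0 elsewhere. -/
def chi (c : C) (t : T) : C × T → ℕ := fun p => if p = (c, t) then 1 else 0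

/-- A distribution is feasible if each school's total is within its capacity. -/
def Feasible (q : C → ℕ) (ξ : C × T → ℕ) : Prop := ∀ c, (∑ t, ξ (c, t)) ≤ q c

/-- M♮-convexity of a set of distributions. -/
def MNatConvex (Ξ : Set (C × T → ℕ)) : Prop :=
  ∀ ξ ξ', ξ ∈ Ξ → ξ' ∈ Ξ → ∀ c t, ξ' (c, t) < ξ (c, t) →
    ((ξ - chi c t) ∈ Ξ ∧ (ξ' + chi c t) ∈ Ξ) ∨
    ∃ c' t', ξ (c', t') < ξ' (c', t') ∧
      (ξ - chi c t + chi c' t') ∈ Ξ ∧ (ξ' + chi c t - chi c' t') ∈ Ξ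

/-- M-convexity of a set of distributions. -/
def MConvex (Ξ : Set (C × T → ℕ)) : Prop :=
  ∀ ξ ξ', ξ ∈ Ξ → ξ' ∈ Ξ → ∀ c t, ξ' (c, t) < ξ (c, t) →
    ∃ c' t', ξ (c', t') < ξ' (c', t') ∧
      (ξ - chi c t + chi c' t') ∈ Ξ ∧ (ξ' + chi c t - chi c' t') ∈ Ξ

/-- Pseudo M♮-concavity of a distributional objective (defined on feasible distributions). -/
def PseudoMNatConcave (q : C → ℕ) (f : (C × T → ℕ) → ℝ) : Prop :=
  ∀ ξ ξ', Feasible q ξ → Feasible q ξ' → ∀ c t, ξ' (c, t) < ξ (c, t) →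
    (Feasible q (ξ - chi c t) ∧ Feasible q (ξ' + chi c t) ∧
      min (f ξ) (f ξ') ≤ min (f (ξ - chi c t)) (f (ξ' + chi c t))) ∨
    ∃ c' t', ξ (c', t') < ξ' (c', t') ∧
      Feasible q (ξ - chi c t + chi c' t') ∧ Feasible q (ξ' + chi c t - chi c' t') ∧
      min (f ξ) (f ξ') ≤ min (f (ξ - chi c t + chi c' t')) (f (ξ' + chi c t - chi c' t'))

lemma chi_apply (c : C) (t : T) (c' : C) (t' : T) :
    chi c t (c', t') = if c' = c ∧ t' = t then 1 else 0 := by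
  simp [chi, Prod.ext_iff]

lemma sum_chi_same (c : C) (t : T) : (∑ s, chi c t (c, s)) = 1 := by
  simp [chi_apply]

lemma sum_chi_ne {c c' : C} (h : c' ≠ c) (t : T) : (∑ s, chi c t (c', s)) = 0 := by
  simp [chi_apply, h]

/-- The school-level diversity policy set is M♮-convex. -/
theorem diversity_policy_mnatConvex (q : C → ℕ) (pfl pcl : C × T → ℕ)
    (hpq : ∀ p, pfl p ≤ pcl p) (hcap : ∀ c, (∑ t, pfl (c, t)) ≤ q c) :
    MNatConvex {ξ : C × T → ℕ | Feasible q ξ ∧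
      ∀ c t, pfl (c, t) ≤ ξ (c, t) ∧ ξ (c, t) ≤ pcl (c, t)} := by
  rintro ξ ξ' ⟨hf, hb⟩ ⟨hf', hb'⟩ c t hlt
  have hξt : 1 ≤ ξ (c, t) := by omega
  by_cases hq : (∑ s, ξ' (c, s)) < q c
  · left
    refine ⟨⟨?_, ?_⟩, ⟨?_, ?_⟩⟩
    · intro c''
      calc (∑ s, (ξ - chi c t) (c'', s)) ≤ ∑ s, ξ (c'', s) :=
            Finset.sum_le_sum fun s _ => Nat.sub_le _ _
        _ ≤ q c'' := hf c''
    · intro c'' t''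
      have A := hb c'' t''
      have A2 := hb c t
      have B2 := hb' c t
      simp only [Pi.sub_apply, chi_apply]
      rcases eq_or_ne c c'' with rfl | hc
      · by_cases ha : t'' = t
        · subst ha; simp only [and_self, if_true] <;> omega
        · simp [ha] <;> omega
      · simp [Ne.symm hc] <;> omega
    · intro c''
      rcases eq_or_ne c c'' with rfl | hc
      · have : (∑ s, (ξ' + chi c t) (c, s)) = (∑ s, ξ' (c, s)) + 1 := by
          simp only [Pi.add_apply]
          rw [Finset.sum_add_distrib, sum_chi_same]
        omega
      · have : (∑ s, (ξ' + chi c t) (c'', s)) = ∑ s, ξ' (c'', s) := by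
          simp only [Pi.add_apply]
          rw [Finset.sum_add_distrib, sum_chi_ne hc.symm, add_zero]
        rw [this]; exact hf' c''
    · intro c'' t''
      have A := hb' c'' t''
      have A2 := hb c t
      have B2 := hb' c t
      simp only [Pi.add_apply, chi_apply]
      rcases eq_or_ne c c'' with rfl | hc
      · by_cases ha : t'' = t
        · subst ha; simp only [and_self, if_true] <;> omega
        · simp [ha] <;> omega
      · simp [Ne.symm hc] <;> omega
  · right
    push_neg at hq
    have hsum : (∑ s, ξ (c, s)) ≤ ∑ s, ξ' (c, s) := le_trans (hf c) hq
    have herase : ∑ s ∈ Finset.univ.erase t, ξ (c, s) < ∑ s ∈ Finset.univ.erase t, ξ' (c, s) := by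
      have e1 : (∑ s, ξ (c, s)) = ξ (c, t) + ∑ s ∈ Finset.univ.erase t, ξ (c, s) :=
        (Finset.add_sum_erase _ _ (Finset.mem_univ t)).symm
      have e2 : (∑ s, ξ' (c, s)) = ξ' (c, t) + ∑ s ∈ Finset.univ.erase t, ξ' (c, s) :=
        (Finset.add_sum_erase _ _ (Finset.mem_univ t)).symm
      omega
    obtain ⟨t', ht'mem, ht'⟩ := Finset.exists_lt_of_sum_lt herase
    have htne : t' ≠ t := (Finset.mem_erase.mp ht'mem).1
    refine ⟨c, t', ht', ⟨?_, ?_⟩, ⟨?_, ?_⟩⟩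
    · intro c''
      rcases eq_or_ne c c'' with rfl | hc
      · have hpt : ∀ s, (ξ - chi c t + chi c t') (c, s) + chi c t (c, s)
            = ξ (c, s) + chi c t' (c, s) := by
          intro s
          simp only [Pi.add_apply, Pi.sub_apply, chi_apply, true_and]
          split_ifs with h1 h2
          all_goals subst_vars
          all_goals try omega
          all_goals simp_all
        have key := Finset.sum_congr rfl fun s (_ : s ∈ Finset.univ) => hpt s
        rw [Finset.sum_add_distrib, Finset.sum_add_distrib, sum_chi_same, sum_chi_same] at key
        have := hf c
        omega
      · have : (∑ s, (ξ - chi c t + chi c t') (c'', s)) = ∑ s, ξ (c'', s) := by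
          refine Finset.sum_congr rfl fun s _ => ?_
          simp [Pi.add_apply, Pi.sub_apply, chi_apply, hc.symm]
        rw [this]; exact hf c''
    · intro c'' t''
      have A := hb c'' t''
      have B := hb' c'' t''
      have A2 := hb c t
      have B2 := hb' c t
      have A3 := hb c t'
      have B3 := hb' c t'
      simp only [Pi.add_apply, Pi.sub_apply, chi_apply]
      rcases eq_or_ne c c'' with rfl | hc
      · by_cases ha : t'' = t
        · subst ha; simp [Ne.symm htne] <;> omega
        · by_cases hb2 : t'' = t'
          · subst hb2; simp [htne] <;> omega
          · simp [ha, hb2] <;> omega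
      · simp [Ne.symm hc] <;> omega
    · intro c''
      rcases eq_or_ne c c'' with rfl | hc
      · have hξ't' : 1 ≤ ξ' (c, t') := by omega
        have hpt : ∀ s, (ξ' + chi c t - chi c t') (c, s) + chi c t' (c, s)
            = ξ' (c, s) + chi c t (c, s) := by
          intro s
          simp only [Pi.add_apply, Pi.sub_apply, chi_apply, true_and]
          split_ifs with h1 h2
          all_goals subst_vars
          all_goals try omega
          all_goals simp_all
        have key := Finset.sum_congr rfl fun s (_ : s ∈ Finset.univ) => hpt s
        rw [Finset.sum_add_distrib, Finset.sum_add_distrib, sum_chi_same, sum_chi_same] at key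
        have := hf' c
        omega
      · have : (∑ s, (ξ' + chi c t - chi c t') (c'', s)) = ∑ s, ξ' (c'', s) := by
          refine Finset.sum_congr rfl fun s _ => ?_
          simp [Pi.add_apply, Pi.sub_apply, chi_apply, hc.symm]
        rw [this]; exact hf' c''
    · intro c'' t''
      have A := hb c'' t''
      have B := hb' c'' t''
      have A2 := hb c t
      have B2 := hb' c t
      have A3 := hb c t'
      have B3 := hb' c t'
      simp only [Pi.add_apply, Pi.sub_apply, chi_apply]
      rcases eq_or_ne c c'' with rfl | hc
      · by_cases ha : t'' = t
        · subst ha; simp [Ne.symm htne] <;> omega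
        · by_cases hb2 : t'' = t'
          · subst hb2; simp [htne] <;> omega
          · simp [ha, hb2] <;> omega
      · simp [Ne.symm hc] <;> omega
end

section
/- The balanced-exchange policy set Ξ^B = {ξ ∈ Ξ^0 : ∀d ∈ D, Σ_{t, c : d(c)=d} ξ_c^t = k_d} is M-convex (and hence M♮-convex). -/
variable {C T : Type*} [Fintype C] [Fintype T] [DecidableEq C] [DecidableEq T]

set_option linter.unusedSectionVars false in
lemma chi_le {ξ : C × T → ℕ} {c : C} {t : T} (h : 1 ≤ ξ (c, t)) : chi c t ≤ ξ := by
  intro p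
  by_cases hp : p = (c, t) <;> simp [chi, hp]
  exact h

set_option linter.unusedSectionVars false in
lemma sum_chi (c : C) (t : T) (x : C) :
    ∑ t', chi c t (x, t') = if x = c then 1 else 0 := by
  simp only [chi, Prod.mk.injEq]
  by_cases hx : x = c
  · subst hx; simp
  · simp [hx]

lemma schoolSum {ξ : C × T → ℕ} (a b : C) (s u : T) (h1 : 1 ≤ ξ (a, s)) (x : C) :
    ∑ t', (ξ - chi a s + chi b u) (x, t') =
      ∑ t', ξ (x, t') - (if x = a then 1 else 0) + (if x = b then 1 else 0) := by
  have hrw : ∀ t', (ξ - chi a s + chi b u) (x, t') =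
      (ξ (x, t') - chi a s (x, t')) + chi b u (x, t') := fun _ => rfl
  rw [Finset.sum_congr rfl (fun t' _ => hrw t'), Finset.sum_add_distrib,
    Finset.sum_tsub_distrib _ (fun t' _ => chi_le h1 (x, t')), sum_chi, sum_chi]

set_option linter.unusedSectionVars false in
lemma add_sub_comm {ξ : C × T → ℕ} {a b : C} {s u : T} (h1 : 1 ≤ ξ (a, s)) :
    ξ + chi b u - chi a s = ξ - chi a s + chi b u := by
  funext p
  have h2 : chi a s p ≤ ξ p := chi_le h1 p
  show ξ p + chi b u p - chi a s p = ξ p - chi a s p + chi b u p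
  omega

lemma mem_exchange {D : Type*} [Fintype D] [DecidableEq D]
    {q : C → ℕ} {dmap : C → D} {k : D → ℕ} {ξ : C × T → ℕ}
    (hξ : ξ ∈ {ξ : C × T → ℕ | Feasible q ξ ∧
      ∀ d' : D, (∑ c ∈ Finset.univ.filter (fun c => dmap c = d'), ∑ t, ξ (c, t)) = k d'})
    (a b : C) (s u : T) (h1 : 1 ≤ ξ (a, s)) (hd : dmap a = dmap b)
    (hq : a = b ∨ ∑ u', ξ (b, u') + 1 ≤ q b) :
    (ξ - chi a s + chi b u) ∈ {ξ : C × T → ℕ | Feasible q ξ ∧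
      ∀ d' : D, (∑ c ∈ Finset.univ.filter (fun c => dmap c = d'), ∑ t, ξ (c, t)) = k d'} := by
  obtain ⟨hfeas, hdist⟩ := hξ
  have hSa : 1 ≤ ∑ t', ξ (a, t') :=
    le_trans h1 (Finset.single_le_sum (f := fun t' => ξ (a, t')) (fun _ _ => Nat.zero_le _)
      (Finset.mem_univ s))
  constructor
  · intro x
    rw [schoolSum a b s u h1 x]
    have hx := hfeas x
    by_cases hxa : x = a <;> by_cases hxb : x = b
    · rw [if_pos hxa, if_pos hxb]; subst hxa; omega
    · rw [if_pos hxa, if_neg hxb]; omega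
    · rw [if_neg hxa, if_pos hxb]
      rcases hq with h | h
      · exact absurd (h.trans hxb.symm).symm hxa
      · subst hxb; omega
    · rw [if_neg hxa, if_neg hxb]; omega
  · intro d'
    have key : ∀ x ∈ Finset.univ.filter (fun c => dmap c = d'),
        (fun x => (if x = a then 1 else 0)) x ≤ (fun x => ∑ t', ξ (x, t')) x := by
      intro x _
      by_cases hxa : x = a
      · subst hxa; simpa using hSa
      · simp [hxa]
    rw [Finset.sum_congr rfl (fun x _ => schoolSum a b s u h1 x),
      Finset.sum_add_distrib, Finset.sum_tsub_distrib _ key]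
    rw [Finset.sum_ite_eq' _ a (fun _ => 1), Finset.sum_ite_eq' _ b (fun _ => 1)]
    simp only [Finset.mem_filter, Finset.mem_univ, true_and]
    have ha : (∑ x ∈ Finset.univ.filter (fun c => dmap c = d'), ∑ t', ξ (x, t')) = k d' :=
      hdist d'
    by_cases hda : dmap a = d'
    · have hmem : a ∈ Finset.univ.filter (fun c => dmap c = d') := by simp [hda]
      have : (∑ t', ξ (a, t')) ≤ ∑ x ∈ Finset.univ.filter (fun c => dmap c = d'), ∑ t', ξ (x, t') :=
        Finset.single_le_sum (f := fun x => ∑ t', ξ (x, t')) (fun _ _ => Nat.zero_le _) hmem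
      rw [if_pos hda, if_pos (hd ▸ hda)]
      omega
    · rw [if_neg hda, if_neg (hd ▸ hda)]
      omega

/-- The balanced-exchange policy set is M-convex (hence M♮-convex). -/
theorem balanced_exchange_mConvex {D : Type*} [Fintype D] [DecidableEq D]
    (q : C → ℕ) (dmap : C → D) (k : D → ℕ) :
    MConvex {ξ : C × T → ℕ | Feasible q ξ ∧
      ∀ d' : D, (∑ c ∈ Finset.univ.filter (fun c => dmap c = d'), ∑ t, ξ (c, t)) = k d'} ∧
    MNatConvex {ξ : C × T → ℕ | Feasible q ξ ∧
      ∀ d' : D, (∑ c ∈ Finset.univ.filter (fun c => dmap c = d'), ∑ t, ξ (c, t)) = k d'} := by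
  
  have hM : MConvex {ξ : C × T → ℕ | Feasible q ξ ∧
      ∀ d' : D, (∑ c ∈ Finset.univ.filter (fun c => dmap c = d'), ∑ t, ξ (c, t)) = k d'} := by
    intro ξ ξ' hξ hξ' c t hlt
    have h1 : 1 ≤ ξ (c, t) := by omega
    by_cases hA : ∃ t', ξ (c, t') < ξ' (c, t')
    · obtain ⟨t', ht'⟩ := hA
      refine ⟨c, t', ht', ?_, ?_⟩
      · exact mem_exchange hξ c c t t' h1 rfl (Or.inl rfl)
      · rw [add_sub_comm (show 1 ≤ ξ' (c, t') by omega)]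
        exact mem_exchange hξ' c c t' t (by omega) rfl (Or.inl rfl)
    · push_neg at hA
      have hSc : (∑ t', ξ' (c, t')) < ∑ t', ξ (c, t') :=
        Finset.sum_lt_sum (fun i _ => hA i) ⟨t, Finset.mem_univ t, hlt⟩
      have hc_mem : c ∈ Finset.univ.filter (fun x => dmap x = dmap c) := by simp
      have hex : ∃ c'' ∈ Finset.univ.filter (fun x => dmap x = dmap c),
          (∑ t', ξ (c'', t')) < ∑ t', ξ' (c'', t') := by
        by_contra hcon
        push_neg at hcon
        have hlt2 := Finset.sum_lt_sum (fun i hi => hcon i hi) ⟨c, hc_mem, hSc⟩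
        rw [hξ'.2 (dmap c), hξ.2 (dmap c)] at hlt2
        exact lt_irrefl _ hlt2
      obtain ⟨c'', hc''mem, hSc''⟩ := hex
      have hd'' : dmap c'' = dmap c := by simpa using hc''mem
      have hex2 : ∃ t'', ξ (c'', t'') < ξ' (c'', t'') := by
        by_contra h
        push_neg at h
        exact absurd (Finset.sum_le_sum fun i _ => h i) (not_le.mpr hSc'')
      obtain ⟨t'', ht''⟩ := hex2
      refine ⟨c'', t'', ht'', ?_, ?_⟩
      · exact mem_exchange hξ c c'' t t'' h1 hd''.symm
          (Or.inr (by have := hξ'.1 c''; omega))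
      · rw [add_sub_comm (show 1 ≤ ξ' (c'', t'') by omega)]
        exact mem_exchange hξ' c'' c t'' t (by omega) hd''
          (Or.inr (by have := hξ.1 c; omega))
  refine ⟨hM, ?_⟩
  intro ξ ξ' hξ hξ' c t hlt
  exact Or.inr (hM ξ ξ' hξ hξ' c t hlt)
end
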